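/- Let μ₁, μ₂ ∈ ℝ, σ > 0, and c ≥ 0, and set s = √(μ₁² + μ₂²). If X and Y are independent real random variables with X distributed as gaussianReal μ₁ (σ²/2) and Y distributed as gaussianReal μ₂ (σ²/2), then P(X² + Y² ≤ c) = ∫₀^{√c} (2r/σ²) · e^{−(r² + s²)/σ²} · ( (1/(2π)) ∫₀^{2π} e^{(2 r s/σ²) cos φ} dφ ) dr. -/

import Mathlib

open MeasureTheory ProbabilityTheory Real Set
open scoped ENNReal NNReal

/-!
In polar coordinates `x = r cos φ`, `y = r sin φ` the product density of `(X, Y)` has exponent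
`-(r² + s²)/σ² + (2r/σ²)(μ₁ cos φ + μ₂ sin φ)`. Writing `(μ₁, μ₂) = s (cos θ, sin θ)`, the angular
factor is `exp ((2rs/σ²) cos (φ - θ))`, whose integral over a full period does not depend on `θ`.
-/

/-- The Rician density with parameters `s` and `σ²`; the bracket is `I₀ (2 r s / σ²)`. -/
noncomputable def ricianPDFReal (s σ r : ℝ) : ℝ :=
  (2 * r / σ ^ 2) * exp (-(r ^ 2 + s ^ 2) / σ ^ 2)
    * ((1 / (2 * π)) * ∫ φ in 0..2 * π, exp ((2 * r * s / σ ^ 2) * cos φ))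

lemma continuous_ricianPDFReal (s σ : ℝ) : Continuous (ricianPDFReal s σ) := by
  unfold ricianPDFReal
  fun_prop

lemma ricianPDFReal_nonneg (s σ : ℝ) {r : ℝ} (hr : 0 ≤ r) : 0 ≤ ricianPDFReal s σ r := by
  unfold ricianPDFReal
  have := intervalIntegral.integral_nonneg (μ := volume) (by positivity : (0 : ℝ) ≤ 2 * π)
    fun φ _ ↦ (exp_pos ((2 * r * s / σ ^ 2) * cos φ)).le
  positivity

lemma integral_comp_mul_cos_add_mul_sin {E : Type*} [NormedAddCommGroup E] [NormedSpace ℝ E]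
    (f : ℝ → E) (a b : ℝ) :
    ∫ φ in -π..π, f (a * cos φ + b * sin φ) = ∫ φ in 0..2 * π, f (√(a ^ 2 + b ^ 2) * cos φ) := by
  set z : ℂ := ⟨a, b⟩
  have hz : ‖z‖ = √(a ^ 2 + b ^ 2) := by
    rw [Complex.norm_def, Complex.normSq_mk]; ring_nf
  have hrot : ∀ φ, a * cos φ + b * sin φ = ‖z‖ * cos (φ - z.arg) := by
    intro φ
    have hre : ‖z‖ * cos z.arg = a := Complex.norm_mul_cos_arg z
    have him : ‖z‖ * sin z.arg = b := Complex.norm_mul_sin_arg z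
    rw [cos_sub]
    linear_combination (-cos φ) * hre - sin φ * him
  have hper : Function.Periodic (fun φ ↦ f (‖z‖ * cos φ)) (2 * π) := fun φ ↦ by
    simp only [cos_periodic φ]
  simp_rw [hrot, intervalIntegral.integral_comp_sub_right (fun φ ↦ f (‖z‖ * cos φ)), ← hz]
  simpa [two_mul, sub_eq_add_neg, add_assoc, add_comm, add_left_comm] using
    hper.intervalIntegral_add_eq (-π - z.arg) 0

lemma gaussianPDFReal_mul_gaussianPDFReal_polar (μ₁ μ₂ : ℝ) (v : ℝ≥0) (r φ : ℝ) :
    gaussianPDFReal μ₁ v (r * cos φ) * gaussianPDFReal μ₂ v (r * sin φ)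
      = (2 * π * v)⁻¹ * exp (-(r ^ 2 + (μ₁ ^ 2 + μ₂ ^ 2)) / (2 * v))
        * exp ((r * μ₁ / v) * cos φ + (r * μ₂ / v) * sin φ) := by
  have hsqrt : (√(2 * π * v))⁻¹ * (√(2 * π * v))⁻¹ = (2 * π * v)⁻¹ := by
    rw [← mul_inv, mul_self_sqrt (by positivity)]
  have hexp : -(r * cos φ - μ₁) ^ 2 / (2 * v) + -(r * sin φ - μ₂) ^ 2 / (2 * v)
      = -(r ^ 2 + (μ₁ ^ 2 + μ₂ ^ 2)) / (2 * v) + ((r * μ₁ / v) * cos φ + (r * μ₂ / v) * sin φ) := by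
    linear_combination (-(r ^ 2) / (2 * v)) * sin_sq_add_cos_sq φ
  simp only [gaussianPDFReal]
  calc _ = (√(2 * π * v))⁻¹ * (√(2 * π * v))⁻¹
        * exp (-(r * cos φ - μ₁) ^ 2 / (2 * v) + -(r * sin φ - μ₂) ^ 2 / (2 * v)) := by
        rw [exp_add]; ring
    _ = _ := by rw [hsqrt, hexp, exp_add, ← mul_assoc]

lemma integral_polar_gaussianPDFReal_eq_ricianPDFReal (μ₁ μ₂ σ : ℝ) {r : ℝ} (hr : 0 ≤ r) :
    ∫ φ in -π..π, r * (gaussianPDFReal μ₁ (σ ^ 2 / 2).toNNReal (r * cos φ)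
      * gaussianPDFReal μ₂ (σ ^ 2 / 2).toNNReal (r * sin φ))
      = ricianPDFReal √(μ₁ ^ 2 + μ₂ ^ 2) σ r := by
  have hv : ((σ ^ 2 / 2).toNNReal : ℝ) = σ ^ 2 / 2 := Real.coe_toNNReal _ (by positivity)
  set s := √(μ₁ ^ 2 + μ₂ ^ 2)
  have hμ : μ₁ ^ 2 + μ₂ ^ 2 = s ^ 2 := (sq_sqrt (by positivity)).symm
  have hnorm :
      √((r * μ₁ / (σ ^ 2 / 2)) ^ 2 + (r * μ₂ / (σ ^ 2 / 2)) ^ 2) = 2 * r * s / σ ^ 2 := by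
    rw [← sqrt_sq (by positivity : 0 ≤ 2 * r * s / σ ^ 2)]
    congr 1
    linear_combination (2 * r / σ ^ 2) ^ 2 * hμ
  simp_rw [gaussianPDFReal_mul_gaussianPDFReal_polar, hv, ← mul_assoc]
  rw [intervalIntegral.integral_const_mul,
    integral_comp_mul_cos_add_mul_sin (fun x ↦ exp x), hnorm, hμ, ricianPDFReal]
  field_simp

lemma setLIntegral_disk_eq_lintegral_polar {f : ℝ × ℝ → ℝ≥0∞} (hf : Measurable f) (c : ℝ) :
    ∫⁻ p in {p : ℝ × ℝ | p.1 ^ 2 + p.2 ^ 2 ≤ c}, f p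
      = ∫⁻ r in Ioc 0 √c, ∫⁻ φ in Ioo (-π) π, ENNReal.ofReal r * f (r * cos φ, r * sin φ) := by
  have hD : MeasurableSet {p : ℝ × ℝ | p.1 ^ 2 + p.2 ^ 2 ≤ c} :=
    measurableSet_le (by fun_prop) measurable_const
  have hpolar : ∀ r φ : ℝ, (r * cos φ) ^ 2 + (r * sin φ) ^ 2 = r ^ 2 := fun r φ ↦ by
    linear_combination r ^ 2 * cos_sq_add_sin_sq φ
  rw [← lintegral_indicator hD, ← lintegral_comp_polarCoord_symm, polarCoord_target,
    Measure.volume_eq_prod, ← Measure.prod_restrict, lintegral_prod _ (by fun_prop),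
    ← lintegral_indicator measurableSet_Ioc, ← lintegral_indicator measurableSet_Ioi]
  refine lintegral_congr fun r ↦ ?_
  rcases le_or_gt r 0 with hr | hr
  · simp [hr.not_gt]
  have hmem : ∀ φ, (r * cos φ, r * sin φ) ∈ {p : ℝ × ℝ | p.1 ^ 2 + p.2 ^ 2 ≤ c} ↔ r ≤ √c := by
    intro φ
    rw [mem_ofPred_eq, hpolar, Real.le_sqrt' hr]
  by_cases hrc : r ≤ √c <;> simp [hrc, hr, hmem]

lemma lintegral_polar_gaussianPDF_eq_ricianPDFReal (μ₁ μ₂ σ : ℝ) {r : ℝ} (hr : 0 ≤ r) :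
    ∫⁻ φ in Ioo (-π) π, ENNReal.ofReal r * (gaussianPDF μ₁ (σ ^ 2 / 2).toNNReal (r * cos φ)
      * gaussianPDF μ₂ (σ ^ 2 / 2).toNNReal (r * sin φ))
      = ENNReal.ofReal (ricianPDFReal √(μ₁ ^ 2 + μ₂ ^ 2) σ r) := by
  rw [← integral_polar_gaussianPDFReal_eq_ricianPDFReal μ₁ μ₂ σ hr,
    intervalIntegral.integral_of_le (by linarith [pi_pos]), integral_Ioc_eq_integral_Ioo,
    ofReal_integral_eq_lintegral_ofReal]
  · simp only [gaussianPDF, ENNReal.ofReal_mul hr,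
      ENNReal.ofReal_mul (gaussianPDFReal_nonneg _ _ _)]
  · refine (Continuous.integrableOn_Icc ?_).mono_set Ioo_subset_Icc_self
    simp only [gaussianPDFReal]
    fun_prop
  · exact ae_of_all _ fun φ ↦
      mul_nonneg hr (mul_nonneg (gaussianPDFReal_nonneg _ _ _) (gaussianPDFReal_nonneg _ _ _))

lemma gaussianReal_prod_eq_withDensity (μ₁ μ₂ : ℝ) {v₁ v₂ : ℝ≥0} (hv₁ : v₁ ≠ 0) (hv₂ : v₂ ≠ 0) :
    (gaussianReal μ₁ v₁).prod (gaussianReal μ₂ v₂)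
      = volume.withDensity fun p : ℝ × ℝ ↦ gaussianPDF μ₁ v₁ p.1 * gaussianPDF μ₂ v₂ p.2 := by
  rw [gaussianReal_of_var_ne_zero _ hv₁, gaussianReal_of_var_ne_zero _ hv₂,
    prod_withDensity (measurable_gaussianPDF _ _) (measurable_gaussianPDF _ _),
    Measure.volume_eq_prod]

theorem outage_probability_two_dof_general
    {Ω : Type*} [MeasurableSpace Ω] (P : Measure Ω) [IsProbabilityMeasure P]
    (μ₁ μ₂ σ c : ℝ) (hσ : 0 < σ)
    (s : ℝ) (hs : s = Real.sqrt (μ₁ ^ 2 + μ₂ ^ 2))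
    (X Y : Ω → ℝ) (hmX : Measurable X) (hmY : Measurable Y)
    (hindep : IndepFun X Y P)
    (hX : P.map X = gaussianReal μ₁ (σ ^ 2 / 2).toNNReal)
    (hY : P.map Y = gaussianReal μ₂ (σ ^ 2 / 2).toNNReal) :
    (P {ω | X ω ^ 2 + Y ω ^ 2 ≤ c}).toReal
      = ∫ r in (0 : ℝ)..Real.sqrt c,
          (2 * r / σ ^ 2) * Real.exp (-(r ^ 2 + s ^ 2) / σ ^ 2)
            * ((1 / (2 * Real.pi))
                * ∫ φ in (0 : ℝ)..(2 * Real.pi),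
                    Real.exp ((2 * r * s / σ ^ 2) * Real.cos φ)) := by
  have hv : (σ ^ 2 / 2).toNNReal ≠ 0 := by
    simp only [ne_eq, Real.toNNReal_eq_zero, not_le]
    positivity
  have hD : MeasurableSet {p : ℝ × ℝ | p.1 ^ 2 + p.2 ^ 2 ≤ c} :=
    measurableSet_le (by fun_prop) measurable_const
  have hradial : ∀ r ∈ Ioc 0 √c, ∫⁻ φ in Ioo (-π) π, ENNReal.ofReal r
      * (gaussianPDF μ₁ (σ ^ 2 / 2).toNNReal (r * cos φ)
        * gaussianPDF μ₂ (σ ^ 2 / 2).toNNReal (r * sin φ))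
      = ENNReal.ofReal (ricianPDFReal s σ r) := fun r hr ↦ by
    rw [hs, lintegral_polar_gaussianPDF_eq_ricianPDFReal μ₁ μ₂ σ hr.1.le]
  change (P ((fun ω ↦ (X ω, Y ω)) ⁻¹' {p : ℝ × ℝ | p.1 ^ 2 + p.2 ^ 2 ≤ c})).toReal
    = ∫ r in (0 : ℝ)..√c, ricianPDFReal s σ r
  rw [← Measure.map_apply (hmX.prodMk hmY) hD,
    hindep.map_prod_eq_prod_map_map hmX.aemeasurable hmY.aemeasurable, hX, hY,
    gaussianReal_prod_eq_withDensity μ₁ μ₂ hv hv,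
    withDensity_apply _ hD, setLIntegral_disk_eq_lintegral_polar (by fun_prop) c,
    setLIntegral_congr_fun measurableSet_Ioc hradial,
    intervalIntegral.integral_of_le (sqrt_nonneg c), integral_eq_lintegral_of_nonneg_ae]
  · exact (ae_restrict_mem measurableSet_Ioc).mono fun r hr ↦ ricianPDFReal_nonneg s σ hr.1.le
  · exact (continuous_ricianPDFReal s σ).aestronglyMeasurable

/-- Theorem 2 (two degrees of freedom): for independent `X ~ gaussianReal μ₁ (σ²/2)`
and `Y ~ gaussianReal μ₂ (σ²/2)` and `c ≥ 0`, with `s = √(μ₁² + μ₂²)`,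
`P(X² + Y² ≤ c) = ∫₀^{√c} (2r/σ²) e^{−(r²+s²)/σ²} ((1/(2π)) ∫₀^{2π} e^{(2rs/σ²)cos φ} dφ) dr`
(the Rician / noncentral chi-square CDF). -/
theorem outage_probability_two_dof
    {Ω : Type*} [MeasurableSpace Ω] (P : Measure Ω) [IsProbabilityMeasure P]
    (μ₁ μ₂ σ c : ℝ) (hσ : 0 < σ) (hc : 0 ≤ c)
    (s : ℝ) (hs : s = Real.sqrt (μ₁ ^ 2 + μ₂ ^ 2))
    (X Y : Ω → ℝ) (hmX : Measurable X) (hmY : Measurable Y)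
    (hindep : IndepFun X Y P)
    (hX : P.map X = gaussianReal μ₁ (σ ^ 2 / 2).toNNReal)
    (hY : P.map Y = gaussianReal μ₂ (σ ^ 2 / 2).toNNReal) :
    (P {ω | X ω ^ 2 + Y ω ^ 2 ≤ c}).toReal
      = ∫ r in (0 : ℝ)..Real.sqrt c,
          (2 * r / σ ^ 2) * Real.exp (-(r ^ 2 + s ^ 2) / σ ^ 2)
            * ((1 / (2 * Real.pi))
                * ∫ φ in (0 : ℝ)..(2 * Real.pi),
                    Real.exp ((2 * r * s / σ ^ 2) * Real.cos φ)) :=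
  outage_probability_two_dof_general P μ₁ μ₂ σ c hσ s hs X Y hmX hmY hindep hX hY
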